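/- arXiv:1803.01563 — 5 statements merged into one kernel-verified Lean document; each statement's English description precedes it below -/
import Mathlib

section
/- Let N ≥ 3 be an integer and p ∈ (N/(N-2), (N+2)/(N-2)). Then (2p/(p-1))·(N-2-2/(p-1)) ≤ (N-2)²/4 if and only if p ≤ p_c, and equality holds if and only if p = p_c. In particular, for p ∈ (N/(N-2), p_c] one has p·c_p^{p-1} ≤ (N-2)²/4 with equality only at p = p_c, and for p ∈ (p_c, (N+2)/(N-2)) one has (2p/(p-1))·(N-2-2/(p-1)) > (N-2)²/4. -/
/-!
Put `t = 2/(p-1)`, a decreasing function of `p` that maps `(N/(N-2), (N+2)/(N-2))` onto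
`((N-2)/2, N-2)`. Then `2p/(p-1) = t + 2`, and
`(N-2)²/4 - (t+2)(N-2-t) = (t - t₊)(t - t₋)` with `t± = (N-4 ± 2√(N-1))/2`.
Since `t₋ < (N-2)/2 < t`, the sign is that of `t - t₊`, and `t₊ = 2/(p_c-1)`, so `t ≥ t₊`
exactly when `p ≤ p_c`. Finally `c_p^{p-1} = t(N-2-t)`, so `p c_p^{p-1}` is the same quantity.
-/

open Real MeasureTheory Filter Metric Set

noncomputable section

/-- The Euclidean Laplacian, as the sum of second directional derivatives along the
coordinate axes. -/
def lap {N : ℕ} (u : EuclideanSpace ℝ (Fin N) → ℝ) (x : EuclideanSpace ℝ (Fin N)) : ℝ :=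
  ∑ i : Fin N,
    fderiv ℝ (fun y => fderiv ℝ u y (EuclideanSpace.single i (1:ℝ))) x
      (EuclideanSpace.single i (1:ℝ))

/-- `f` is locally Hölder continuous on `s`. -/
def LocHolderOn {N : ℕ} (f : EuclideanSpace ℝ (Fin N) → ℝ)
    (s : Set (EuclideanSpace ℝ (Fin N))) : Prop :=
  ∀ x ∈ s, ∃ (C α : NNReal) (r : ℝ), 0 < r ∧ 0 < α ∧ α ≤ 1 ∧
    HolderOnWith C α f (Metric.ball x r ∩ s)

/-- The constant `c_p = ((2/(p-1))(N-2-2/(p-1)))^{1/(p-1)}`. -/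
def cp (N : ℕ) (p : ℝ) : ℝ := (2 / (p - 1) * ((N:ℝ) - 2 - 2 / (p - 1))) ^ (1 / (p - 1))

/-- The Joseph–Lundgren exponent `p_c = 1 + 4/(N-4+2√(N-1))`. -/
def pc (N : ℕ) : ℝ := 1 + 4 / ((N:ℝ) - 4 + 2 * Real.sqrt ((N:ℝ) - 1))

/-- The exponent `τ_p^*`. -/
def tauStar (N : ℕ) (p : ℝ) : ℝ :=
  (2 / (p - 1) - ((N:ℝ) - 2) / 2) -
    Real.sqrt ((2 / (p - 1) - ((N:ℝ) - 2) / 2) ^ 2 - 2 * ((N:ℝ) - 2 - 2 / (p - 1)))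

/-- The surface measure `σ_{N-1}` of the unit sphere in `ℝ^N`,
expressed as `N` times the volume of the unit ball. -/
def sphereArea (N : ℕ) : ℝ :=
  (N : ℝ) * (volume (Metric.ball (0 : EuclideanSpace ℝ (Fin N)) 1)).toReal

/-- The normalizing constant `c_N = 1/((N-2)σ_{N-1})` of the fundamental solution of `-Δ`. -/
def cGreen (N : ℕ) : ℝ := 1 / (((N:ℝ) - 2) * sphereArea N)

/-- `u` is a `ν`-fast decaying solution of `-Δ u = V u^p` in `ℝ^N \ {0}`. -/
def FastDecaySol (N : ℕ) (p : ℝ) (V u : EuclideanSpace ℝ (Fin N) → ℝ) (ν : ℝ) : Prop :=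
  ContDiffOn ℝ 2 u {0}ᶜ ∧ (∀ x : EuclideanSpace ℝ (Fin N), x ≠ 0 → 0 < u x) ∧
  (∀ x : EuclideanSpace ℝ (Fin N), x ≠ 0 → -lap u x = V x * u x ^ p) ∧
  Tendsto (fun x : EuclideanSpace ℝ (Fin N) => u x * ‖x‖ ^ ((N:ℝ) - 2))
    (Filter.comap (fun x => ‖x‖) Filter.atTop) (nhds ν)

/-- `u(x)|x|^{2/(p-1)} → c_p` as `x → 0`. -/
def SingAtOrigin (N : ℕ) (p : ℝ) (u : EuclideanSpace ℝ (Fin N) → ℝ) : Prop :=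
  Tendsto (fun x : EuclideanSpace ℝ (Fin N) => u x * ‖x‖ ^ (2 / (p - 1)))
    (nhdsWithin 0 {0}ᶜ) (nhds (cp N p))

/-- Condition `(V₀)` with parameters `c₀, τ₀, c_∞, β`. -/
def V0cond (N : ℕ) (V : EuclideanSpace ℝ (Fin N) → ℝ) (c₀ τ₀ cinf β : ℝ) : Prop :=
  LocHolderOn V {0}ᶜ ∧ 0 < c₀ ∧ 0 < τ₀ ∧
  (∀ x : EuclideanSpace ℝ (Fin N), x ≠ 0 → ‖x‖ ≤ 1 → |V x - 1| ≤ c₀ * ‖x‖ ^ τ₀) ∧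
  1 ≤ cinf ∧
  ∀ x : EuclideanSpace ℝ (Fin N), x ≠ 0 → 0 ≤ V x ∧ V x ≤ cinf * (1 + ‖x‖) ^ β

/-- The root `t₊ = 2/(p_c - 1)`. -/
def tc (N : ℕ) : ℝ := ((N:ℝ) - 4 + 2 * √((N:ℝ) - 1)) / 2

lemma tc_pos {N : ℕ} (hN : 3 ≤ N) : 0 < tc N := by
  have hN' : (3:ℝ) ≤ N := by exact_mod_cast hN
  have hs : 1 < √((N:ℝ) - 1) := by
    rw [Real.lt_sqrt zero_le_one]
    linarith
  unfold tc
  linarith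

lemma pc_eq_one_add_two_div_tc (N : ℕ) : pc N = 1 + 2 / tc N := by
  rw [pc, tc, div_div_eq_mul_div]
  norm_num

lemma le_pc_iff {N : ℕ} (hN : 3 ≤ N) {p : ℝ} (hp : 1 < p) : p ≤ pc N ↔ tc N ≤ 2 / (p - 1) := by
  rw [pc_eq_one_add_two_div_tc, ← sub_le_iff_le_add', le_div_comm₀ (sub_pos.2 hp) (tc_pos hN)]

lemma eq_pc_iff {N : ℕ} (hN : 3 ≤ N) {p : ℝ} (hp : 1 < p) : p = pc N ↔ 2 / (p - 1) = tc N := by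
  rw [pc_eq_one_add_two_div_tc, ← sub_eq_iff_eq_add', eq_div_iff (tc_pos hN).ne',
    div_eq_iff (sub_pos.2 hp).ne', mul_comm, eq_comm]

lemma quarter_sq_sub_mul_eq {n s t : ℝ} (hs : s ^ 2 = n - 1) :
    (n - 2) ^ 2 / 4 - (t + 2) * (n - 2 - t) =
      (t - (n - 4 + 2 * s) / 2) * (t - (n - 4 - 2 * s) / 2) := by
  linear_combination hs

lemma two_mul_div_sub_one {p : ℝ} (hp : p ≠ 1) : 2 * p / (p - 1) = 2 / (p - 1) + 2 := by
  field_simp [sub_ne_zero.2 hp]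
  ring

lemma sub_one_mem_Ioo {n p : ℝ} (hn : 2 < n)
    (hp : p ∈ Ioo (n / (n - 2)) ((n + 2) / (n - 2))) :
    p - 1 ∈ Ioo (2 / (n - 2)) (4 / (n - 2)) := by
  have hn2 : n - 2 ≠ 0 := by linarith
  have hlo : n / (n - 2) - 1 = 2 / (n - 2) := by field_simp; ring
  have hhi : (n + 2) / (n - 2) - 1 = 4 / (n - 2) := by field_simp; ring
  exact ⟨hlo ▸ sub_lt_sub_right hp.1 1, hhi ▸ sub_lt_sub_right hp.2 1⟩

lemma two_div_mem_Ioo {n q : ℝ} (hn : 2 < n) (hq : q ∈ Ioo (2 / (n - 2)) (4 / (n - 2))) :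
    2 / q ∈ Ioo ((n - 2) / 2) (n - 2) := by
  have hn2 : 0 < n - 2 := by linarith
  have hq0 : 0 < q := (div_pos two_pos hn2).trans hq.1
  refine ⟨(lt_div_comm₀ (half_pos hn2) hq0).2 ?_, (div_lt_comm₀ hq0 hn2).2 hq.1⟩
  rw [div_div_eq_mul_div]
  linarith [hq.2]

lemma cp_rpow_sub_one {N : ℕ} {p : ℝ} (hp : 1 < p)
    (h : 0 ≤ 2 / (p - 1) * ((N:ℝ) - 2 - 2 / (p - 1))) :
    cp N p ^ (p - 1) = 2 / (p - 1) * ((N:ℝ) - 2 - 2 / (p - 1)) := by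
  rw [cp, ← Real.rpow_mul h, one_div_mul_cancel (sub_pos.2 hp).ne', Real.rpow_one]

/-- Proposition 2.1 (Joseph–Lundgren dichotomy). -/
theorem statement_3 (N : ℕ) (hN : 3 ≤ N) (p : ℝ)
    (hp : p ∈ Set.Ioo ((N:ℝ) / ((N:ℝ) - 2)) (((N:ℝ) + 2) / ((N:ℝ) - 2))) :
    ((2 * p / (p - 1)) * ((N:ℝ) - 2 - 2 / (p - 1)) ≤ ((N:ℝ) - 2) ^ 2 / 4 ↔ p ≤ pc N) ∧
    ((2 * p / (p - 1)) * ((N:ℝ) - 2 - 2 / (p - 1)) = ((N:ℝ) - 2) ^ 2 / 4 ↔ p = pc N) ∧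
    (p ≤ pc N →
      p * cp N p ^ (p - 1) ≤ ((N:ℝ) - 2) ^ 2 / 4 ∧
      (p * cp N p ^ (p - 1) = ((N:ℝ) - 2) ^ 2 / 4 → p = pc N)) ∧
    (pc N < p →
      (2 * p / (p - 1)) * ((N:ℝ) - 2 - 2 / (p - 1)) > ((N:ℝ) - 2) ^ 2 / 4) := by
  have hN' : (2:ℝ) < N := by exact_mod_cast hN
  have hq := sub_one_mem_Ioo hN' hp
  have hp1 : 1 < p := sub_pos.1 ((div_pos two_pos (by linarith)).trans hq.1)
  obtain ⟨ht_lo, ht_hi⟩ := two_div_mem_Ioo hN' hq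
  set t := 2 / (p - 1)
  have hdiff : ((N:ℝ) - 2) ^ 2 / 4 - (2 * p / (p - 1)) * ((N:ℝ) - 2 - t) =
      (t - tc N) * (t - ((N:ℝ) - 4 - 2 * √((N:ℝ) - 1)) / 2) := by
    rw [two_mul_div_sub_one hp1.ne']
    exact quarter_sq_sub_mul_eq (sq_sqrt (by linarith))
  have hpos : 0 < t - ((N:ℝ) - 4 - 2 * √((N:ℝ) - 1)) / 2 := by
    linarith [sqrt_nonneg ((N:ℝ) - 1)]
  have hle : (2 * p / (p - 1)) * ((N:ℝ) - 2 - t) ≤ ((N:ℝ) - 2) ^ 2 / 4 ↔ p ≤ pc N := by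
    rw [le_pc_iff hN hp1, ← sub_nonneg, hdiff, mul_nonneg_iff_of_pos_right hpos, sub_nonneg]
  have heq : (2 * p / (p - 1)) * ((N:ℝ) - 2 - t) = ((N:ℝ) - 2) ^ 2 / 4 ↔ p = pc N := by
    rw [eq_pc_iff hN hp1, eq_comm, ← sub_eq_zero, hdiff, mul_eq_zero, or_iff_left hpos.ne',
      sub_eq_zero]
  have hcp : p * cp N p ^ (p - 1) = (2 * p / (p - 1)) * ((N:ℝ) - 2 - t) := by
    rw [cp_rpow_sub_one hp1 (mul_nonneg (by linarith) (by linarith)), mul_comm 2 p, mul_div_assoc,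
      mul_assoc]
  exact ⟨hle, heq, fun h => ⟨hcp ▸ hle.2 h, fun h' => heq.1 (hcp ▸ h')⟩,
    fun h => lt_of_not_ge (mt hle.1 (not_le.2 h))⟩
end
end

section
/- Let N ≥ 3 be an integer, p ∈ (N/(N-2), p_c], b_p = N-2-2/(p-1), and fix d₀ > 0. Suppose w̄ : ℝ → ℝ satisfies 0 < w̄(t) ≤ c_p for all t ∈ ℝ and w̄(t) ≤ c₁ e^{b_p t} for all t ≤ 0, for some c₁ > 0. For k > 0 define w_k(x) = |x|^{-2/(p-1)} w̄(-ln|x| + b_p^{-1}(ln k - ln d₀)) for x ∈ ℝ^N\{0}. Then there exists a constant c₂ > 0, depending only on N, c₁ and d₀, such that for every r ∈ (0,1] and every k with 0 < k ≤ d₀ r^{b_p}, one has w_k(x) ≤ c₂ k r^{2-N}(1+|x|)^{2-N} for all |x| ≥ r, and w_k(x) ≤ c_p |x|^{-2/(p-1)} for all 0 < |x| < r. -/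
open Real MeasureTheory Filter Metric Set

noncomputable section

/-- Lemma 2.1, upper bounds for the `k`-fast decaying solutions `w_k`. -/
theorem statement_4 (N : ℕ) (hN : 3 ≤ N) (p : ℝ)
    (hp : p ∈ Set.Ioc ((N:ℝ) / ((N:ℝ) - 2)) (pc N))
    (d₀ : ℝ) (hd₀ : 0 < d₀) (wbar : ℝ → ℝ) (c₁ : ℝ) (hc₁ : 0 < c₁)
    (hwpos : ∀ t : ℝ, 0 < wbar t) (hwle : ∀ t : ℝ, wbar t ≤ cp N p)
    (hwdecay : ∀ t : ℝ, t ≤ 0 → wbar t ≤ c₁ * Real.exp (((N:ℝ) - 2 - 2 / (p - 1)) * t)) :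
    ∃ c₂ : ℝ, 0 < c₂ ∧
      ∀ r ∈ Set.Ioc (0:ℝ) 1, ∀ k : ℝ, 0 < k → k ≤ d₀ * r ^ ((N:ℝ) - 2 - 2 / (p - 1)) →
        ∀ x : EuclideanSpace ℝ (Fin N), x ≠ 0 →
          (r ≤ ‖x‖ →
            ‖x‖ ^ (-(2 / (p - 1))) *
                wbar (-Real.log ‖x‖ +
                  ((N:ℝ) - 2 - 2 / (p - 1))⁻¹ * (Real.log k - Real.log d₀)) ≤
              c₂ * k * r ^ ((2:ℝ) - (N:ℝ)) * (1 + ‖x‖) ^ ((2:ℝ) - (N:ℝ))) ∧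
          (‖x‖ < r →
            ‖x‖ ^ (-(2 / (p - 1))) *
                wbar (-Real.log ‖x‖ +
                  ((N:ℝ) - 2 - 2 / (p - 1))⁻¹ * (Real.log k - Real.log d₀)) ≤
              cp N p * ‖x‖ ^ (-(2 / (p - 1)))) := by
  have hN2 : (2:ℝ) < (N:ℝ) := by exact_mod_cast (by omega : 2 < N)
  have hN2' : (0:ℝ) < (N:ℝ) - 2 := by linarith
  have hp1' : 0 < p - 1 := by
    have : (1:ℝ) < (N:ℝ)/((N:ℝ)-2) := by rw [lt_div_iff₀ hN2']; linarith
    linarith [hp.1]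
  have hb : 0 < (N:ℝ) - 2 - 2/(p-1) := by
    have h := hp.1
    rw [div_lt_iff₀ hN2'] at h
    have h2 : 2 / (p-1) < (N:ℝ) - 2 := by rw [div_lt_iff₀ hp1']; nlinarith
    linarith
  set b := (N:ℝ) - 2 - 2/(p-1) with hbdef
  have hcp : 0 < cp N p := lt_of_lt_of_le (hwpos 0) (hwle 0)
  refine ⟨(c₁/d₀) * 2 ^ ((N:ℝ)-2) + 1, by positivity, ?_⟩
  rintro r ⟨hr0, hr1⟩ k hk hk2 x hx
  have hxn : 0 < ‖x‖ := norm_pos_iff.mpr hx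
  set s := ‖x‖ with hs
  set t := -Real.log s + b⁻¹ * (Real.log k - Real.log d₀) with htdef
  constructor
  · intro hrx
    have ht : t ≤ 0 := by
      have h1 : Real.log k ≤ Real.log d₀ + b * Real.log r := by
        have h := Real.log_le_log hk hk2
        rwa [Real.log_mul (ne_of_gt hd₀) (ne_of_gt (Real.rpow_pos_of_pos hr0 _)),
          Real.log_rpow hr0] at h
      have h2 : b⁻¹ * (Real.log k - Real.log d₀) ≤ Real.log r := by
        rw [inv_mul_le_iff₀ hb]
        linarith
      have h3 : Real.log r ≤ Real.log s := Real.log_le_log hr0 hrx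
      simp only [htdef]
      linarith
    have hwt := hwdecay t ht
    have hexp : Real.exp (b * t) = s ^ (-b) * (k/d₀) := by
      rw [htdef, mul_add, mul_neg, mul_comm b (Real.log s), Real.exp_add,
        mul_inv_cancel_left₀ (ne_of_gt hb), Real.exp_sub, Real.exp_log hk, Real.exp_log hd₀,
        Real.rpow_def_of_pos hxn, mul_comm (Real.log s) (-b), neg_mul, mul_comm b (Real.log s)]
    have key : s ^ (-(2/(p-1))) * wbar t ≤ (c₁/d₀) * k * s ^ ((2:ℝ)-(N:ℝ)) := by
      have h1 : s ^ (-(2/(p-1))) * wbar t ≤ s ^ (-(2/(p-1))) * (c₁ * (s ^ (-b) * (k/d₀))) := by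
        apply mul_le_mul_of_nonneg_left _ (le_of_lt (Real.rpow_pos_of_pos hxn _))
        rw [← hexp]; exact hwt
      have h2 : s ^ (-(2/(p-1))) * s ^ (-b) = s ^ ((2:ℝ)-(N:ℝ)) := by
        rw [← Real.rpow_add hxn]
        congr 1
        rw [hbdef]; ring
      calc s ^ (-(2/(p-1))) * wbar t ≤ s ^ (-(2/(p-1))) * (c₁ * (s ^ (-b) * (k/d₀))) := h1
        _ = (c₁/d₀) * k * (s ^ (-(2/(p-1))) * s ^ (-b)) := by ring
        _ = (c₁/d₀) * k * s ^ ((2:ℝ)-(N:ℝ)) := by rw [h2]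
    have hgeom : s ^ ((2:ℝ)-(N:ℝ)) ≤ 2 ^ ((N:ℝ)-2) * (r ^ ((2:ℝ)-(N:ℝ)) * (1+s) ^ ((2:ℝ)-(N:ℝ))) := by
      have h1s : (0:ℝ) < 1 + s := by linarith
      have hprod : r * (1+s) ≤ 2 * s := by nlinarith
      have h2 : (2*s) ^ ((2:ℝ)-(N:ℝ)) ≤ (r*(1+s)) ^ ((2:ℝ)-(N:ℝ)) := by
        apply Real.rpow_le_rpow_of_nonpos (by positivity) hprod (by linarith)
      have h3 : (2*s) ^ ((2:ℝ)-(N:ℝ)) = 2 ^ ((2:ℝ)-(N:ℝ)) * s ^ ((2:ℝ)-(N:ℝ)) :=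
        Real.mul_rpow (by norm_num) (le_of_lt hxn)
      have h4 : (r*(1+s)) ^ ((2:ℝ)-(N:ℝ)) = r ^ ((2:ℝ)-(N:ℝ)) * (1+s) ^ ((2:ℝ)-(N:ℝ)) :=
        Real.mul_rpow (le_of_lt hr0) (le_of_lt h1s)
      have h5 : (2:ℝ) ^ ((N:ℝ)-2) * 2 ^ ((2:ℝ)-(N:ℝ)) = 1 := by
        rw [← Real.rpow_add (by norm_num)]; norm_num
      calc s ^ ((2:ℝ)-(N:ℝ)) = 2 ^ ((N:ℝ)-2) * (2 ^ ((2:ℝ)-(N:ℝ)) * s ^ ((2:ℝ)-(N:ℝ))) := by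
            rw [← mul_assoc, h5, one_mul]
        _ = 2 ^ ((N:ℝ)-2) * (2*s) ^ ((2:ℝ)-(N:ℝ)) := by rw [h3]
        _ ≤ 2 ^ ((N:ℝ)-2) * (r*(1+s)) ^ ((2:ℝ)-(N:ℝ)) := by
            apply mul_le_mul_of_nonneg_left h2 (by positivity)
        _ = 2 ^ ((N:ℝ)-2) * (r ^ ((2:ℝ)-(N:ℝ)) * (1+s) ^ ((2:ℝ)-(N:ℝ))) := by rw [h4]
    calc s ^ (-(2/(p-1))) * wbar t ≤ (c₁/d₀) * k * s ^ ((2:ℝ)-(N:ℝ)) := key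
      _ ≤ (c₁/d₀) * k * (2 ^ ((N:ℝ)-2) * (r ^ ((2:ℝ)-(N:ℝ)) * (1+s) ^ ((2:ℝ)-(N:ℝ)))) := by
          apply mul_le_mul_of_nonneg_left hgeom (by positivity)
      _ = (c₁/d₀) * 2 ^ ((N:ℝ)-2) * k * r ^ ((2:ℝ)-(N:ℝ)) * (1+s) ^ ((2:ℝ)-(N:ℝ)) := by ring
      _ ≤ ((c₁/d₀) * 2 ^ ((N:ℝ)-2) + 1) * k * r ^ ((2:ℝ)-(N:ℝ)) * (1+s) ^ ((2:ℝ)-(N:ℝ)) := by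
          have : (0:ℝ) ≤ k * r ^ ((2:ℝ)-(N:ℝ)) * (1+s) ^ ((2:ℝ)-(N:ℝ)) := by positivity
          nlinarith
  · intro _
    rw [mul_comm (cp N p)]
    exact mul_le_mul_of_nonneg_left (hwle t) (le_of_lt (Real.rpow_pos_of_pos hxn _))
end
end

section
/- Let N ≥ 3 be an integer, α ∈ (0,N), θ with α < θ < N, and τ > N. Let f : ℝ^N\{0} → ℝ be a nonnegative measurable function satisfying f(x) ≤ |x|^{-θ}(1+|x|)^{θ-τ} for all x ≠ 0. Then there exists c > 0 such that ∫_{ℝ^N} f(y) |x-y|^{α-N} dy ≤ c |x|^{α-θ}(1+|x|)^{θ-N} for every x ∈ ℝ^N\{0}. -/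
/-!
The weight is at most `min (|y|^{-θ}, |y|^{-τ})`. The core estimate is
`∫ |y|^{-θ} |x - y|^{α-N} dy ≲ |x|^{α-θ}`: split `ℝ^N` into `|y| ≤ |x|/2`, where the kernel is
at most `(|x|/2)^{α-N}`; `|x - y| ≤ |x|/2`, where `|y|^{-θ} ≤ (|x|/2)^{-θ}`; and the rest, where
`|y| ≤ 3|x - y|`; each piece is a power integral computed in polar coordinates. This settles
`|x| ≤ 1`. For `|x| ≥ 1`, the part `|y| ≤ |x|/2` is at most `(|x|/2)^{α-N}` times the (finite)
total mass of the weight, and on `|y| > |x|/2` the weight is at most `(|x|/2)^{θ-τ} |y|^{-θ}`, so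
the core estimate gives `≲ |x|^{α-τ} ≤ |x|^{α-N}`.
-/

open Real MeasureTheory Filter Metric Set

noncomputable section

open scoped ENNReal

theorem lintegral_Ioc_rpow {c s : ℝ} (hc : -1 < c) (hs : 0 ≤ s) :
    ∫⁻ r in Ioc 0 s, ENNReal.ofReal (r ^ c) = ENNReal.ofReal (s ^ (c + 1) / (c + 1)) := by
  rw [← ofReal_integral_eq_lintegral_ofReal, ← intervalIntegral.integral_of_le hs,
    integral_rpow (Or.inl hc), Real.zero_rpow (by linarith), sub_zero]
  · exact (intervalIntegral.intervalIntegrable_rpow' hc).1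
  · filter_upwards [ae_restrict_mem measurableSet_Ioc] with r hr
    exact Real.rpow_nonneg hr.1.le _

theorem lintegral_Ioi_rpow {c s : ℝ} (hc : c < -1) (hs : 0 < s) :
    ∫⁻ r in Ioi s, ENNReal.ofReal (r ^ c) = ENNReal.ofReal (-s ^ (c + 1) / (c + 1)) := by
  rw [← ofReal_integral_eq_lintegral_ofReal (integrableOn_Ioi_rpow_of_lt hc hs),
    integral_Ioi_rpow_of_lt hc hs]
  filter_upwards [ae_restrict_mem measurableSet_Ioi] with r hr
  exact Real.rpow_nonneg (hs.trans hr).le _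

theorem ofReal_norm_rpow_mul_norm_sub_rpow_le {E : Type*} [NormedAddCommGroup E] {p q : ℝ}
    (hp : p ≤ 0) (hq : q ≤ 0) {x : E} (hx : x ≠ 0) (y : E) :
    ENNReal.ofReal (‖y‖ ^ p * ‖x - y‖ ^ q) ≤
      ENNReal.ofReal ((‖x‖ / 2) ^ q) *
          (closedBall 0 (‖x‖ / 2)).indicator (fun y => ENNReal.ofReal (‖y‖ ^ p)) y +
        ENNReal.ofReal ((‖x‖ / 2) ^ p) *
          (closedBall x (‖x‖ / 2)).indicator (fun y => ENNReal.ofReal (‖x - y‖ ^ q)) y +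
        ENNReal.ofReal (3 ^ (-q)) *
          (closedBall 0 (‖x‖ / 2))ᶜ.indicator (fun y => ENNReal.ofReal (‖y‖ ^ (p + q))) y := by
  set ρ := ‖x‖ / 2
  have hρ : 0 < ρ := by positivity
  have hx2 : ‖x‖ = 2 * ρ := by ring
  have hxy := norm_sub_norm_le x y
  have hyx := norm_sub_norm_le y x
  rw [norm_sub_rev y x] at hyx
  by_cases h₁ : ‖y‖ ≤ ρ
  · rw [indicator_of_mem (mem_closedBall_zero_iff.2 h₁), ← ENNReal.ofReal_mul (by positivity)]
    refine le_add_right (le_add_right (ENNReal.ofReal_le_ofReal ?_))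
    rw [mul_comm]
    exact mul_le_mul_of_nonneg_right (rpow_le_rpow_of_nonpos hρ (by linarith) hq)
      (by positivity)
  by_cases h₂ : ‖x - y‖ ≤ ρ
  · have hy : y ∈ closedBall x ρ := by rwa [mem_closedBall, dist_eq_norm, norm_sub_rev]
    rw [indicator_of_mem hy, ← ENNReal.ofReal_mul (by positivity)]
    refine le_add_right (le_add_left (ENNReal.ofReal_le_ofReal ?_))
    exact mul_le_mul_of_nonneg_right (rpow_le_rpow_of_nonpos hρ (by linarith) hp)
      (by positivity)
  · have hy : 0 < ‖y‖ := hρ.trans (not_le.1 h₁)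
    have hy' : y ∈ (closedBall 0 ρ)ᶜ := by simpa using h₁
    rw [indicator_of_mem hy', ← ENNReal.ofReal_mul (by positivity)]
    refine le_add_left (ENNReal.ofReal_le_ofReal ?_)
    -- off both balls, `‖y‖ ≤ ‖x‖ + ‖x - y‖ ≤ 3 ‖x - y‖`
    have hkernel : ‖x - y‖ ^ q ≤ (‖y‖ / 3) ^ q :=
      rpow_le_rpow_of_nonpos (by positivity) (by linarith) hq
    calc ‖y‖ ^ p * ‖x - y‖ ^ q ≤ ‖y‖ ^ p * (‖y‖ / 3) ^ q :=
          mul_le_mul_of_nonneg_left hkernel (by positivity)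
      _ = 3 ^ (-q) * ‖y‖ ^ (p + q) := by
          rw [div_rpow hy.le (by norm_num), rpow_neg (by norm_num), rpow_add hy]
          ring

theorem ofReal_min_rpow_mul_norm_sub_rpow_le {E : Type*} [NormedAddCommGroup E] {θ τ q : ℝ}
    (hθτ : θ ≤ τ) (hq : q ≤ 0) {x : E} (hx : x ≠ 0) (y : E) :
    ENNReal.ofReal (min (‖y‖ ^ (-θ)) (‖y‖ ^ (-τ)) * ‖x - y‖ ^ q) ≤
      ENNReal.ofReal ((‖x‖ / 2) ^ q) * ENNReal.ofReal (min (‖y‖ ^ (-θ)) (‖y‖ ^ (-τ))) +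
        ENNReal.ofReal ((‖x‖ / 2) ^ (θ - τ)) * ENNReal.ofReal (‖y‖ ^ (-θ) * ‖x - y‖ ^ q) := by
  set ρ := ‖x‖ / 2
  have hρ : 0 < ρ := by positivity
  have hx2 : ‖x‖ = 2 * ρ := by ring
  by_cases h : ‖y‖ ≤ ρ
  · have hxy : ρ ≤ ‖x - y‖ := by linarith [norm_sub_norm_le x y]
    rw [← ENNReal.ofReal_mul (by positivity)]
    refine le_add_right (ENNReal.ofReal_le_ofReal ?_)
    rw [mul_comm]
    exact mul_le_mul_of_nonneg_right (rpow_le_rpow_of_nonpos hρ hxy hq)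
      (le_min (by positivity) (by positivity))
  · have hy : 0 < ‖y‖ := hρ.trans (not_le.1 h)
    rw [← ENNReal.ofReal_mul (p := ρ ^ (θ - τ)) (by positivity), ← mul_assoc]
    refine le_add_left (ENNReal.ofReal_le_ofReal (mul_le_mul_of_nonneg_right ?_ (by positivity)))
    calc min (‖y‖ ^ (-θ)) (‖y‖ ^ (-τ)) ≤ ‖y‖ ^ (θ - τ) * ‖y‖ ^ (-θ) := by
          rw [← rpow_add hy, show θ - τ + -θ = -τ by ring]
          exact min_le_right _ _
      _ ≤ ρ ^ (θ - τ) * ‖y‖ ^ (-θ) :=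
          mul_le_mul_of_nonneg_right (rpow_le_rpow_of_nonpos hρ (not_le.1 h).le (by linarith))
            (by positivity)

theorem div_two_rpow {R : ℝ} (hR : 0 ≤ R) (a : ℝ) : (R / 2) ^ a = 2 ^ (-a) * R ^ a := by
  rw [div_rpow hR zero_le_two, div_eq_mul_inv, ← rpow_neg zero_le_two, mul_comm]

theorem two_rpow_mul_rpow_le_of_le_one {R α θ d : ℝ} (hR : 0 < R) (hR1 : R ≤ 1) (hθd : θ ≤ d) :
    2 ^ (θ - d) * R ^ (α - θ) ≤ R ^ (α - θ) * (1 + R) ^ (θ - d) := by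
  rw [mul_comm]
  exact mul_le_mul_of_nonneg_left
    (rpow_le_rpow_of_nonpos (by positivity) (by linarith) (by linarith)) (by positivity)

theorem two_rpow_mul_rpow_le_of_one_le {R α θ d : ℝ} (hR1 : 1 ≤ R) (hθd : θ ≤ d) :
    2 ^ (θ - d) * R ^ (α - d) ≤ R ^ (α - θ) * (1 + R) ^ (θ - d) := by
  have hR : 0 < R := by linarith
  calc 2 ^ (θ - d) * R ^ (α - d) = R ^ (α - θ) * (2 * R) ^ (θ - d) := by
        rw [mul_rpow zero_le_two hR.le, ← mul_assoc, mul_comm _ (2 ^ (θ - d)), mul_assoc,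
          ← rpow_add hR]
        ring_nf
    _ ≤ R ^ (α - θ) * (1 + R) ^ (θ - d) :=
        mul_le_mul_of_nonneg_left
          (rpow_le_rpow_of_nonpos (by positivity) (by linarith) (by linarith)) (by positivity)

theorem rpow_neg_mul_one_add_rpow_le_min {r θ τ : ℝ} (hr : 0 < r) (hθτ : θ ≤ τ) :
    r ^ (-θ) * (1 + r) ^ (θ - τ) ≤ min (r ^ (-θ)) (r ^ (-τ)) := by
  refine le_min (mul_le_of_le_one_right (by positivity)
    (rpow_le_one_of_one_le_of_nonpos (by linarith) (by linarith))) ?_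
  calc r ^ (-θ) * (1 + r) ^ (θ - τ) ≤ r ^ (-θ) * r ^ (θ - τ) :=
        mul_le_mul_of_nonneg_left (rpow_le_rpow_of_nonpos hr (by linarith) (by linarith))
          (by positivity)
    _ = r ^ (-τ) := by rw [← rpow_add hr]; ring_nf

theorem integral_le_of_ae_le_of_lintegral_le {X : Type*} [MeasurableSpace X] {μ : Measure X}
    {f g : X → ℝ} {b : ℝ} (hg : AEStronglyMeasurable g μ) (hg₀ : 0 ≤ᵐ[μ] g) (hfg : f ≤ᵐ[μ] g)
    (hb : 0 ≤ b) (h : ∫⁻ x, ENNReal.ofReal (g x) ∂μ ≤ ENNReal.ofReal b) :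
    ∫ x, f x ∂μ ≤ b := by
  have hgi : Integrable g μ :=
    ⟨hg, (hasFiniteIntegral_iff_ofReal hg₀).2 (h.trans_lt ENNReal.ofReal_lt_top)⟩
  calc ∫ x, f x ∂μ ≤ ∫ x, g x ∂μ := by
        by_cases hfi : Integrable f μ
        · exact integral_mono_ae hfi hgi hfg
        · rw [integral_undef hfi]
          exact integral_nonneg_of_ae hg₀
    _ = (∫⁻ x, ENNReal.ofReal (g x) ∂μ).toReal := integral_eq_lintegral_of_nonneg_ae hg₀ hg
    _ ≤ b := ENNReal.toReal_le_of_le_ofReal hb h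

section Radial

local notation "dim" => Module.finrank ℝ

variable {E : Type*} [NormedAddCommGroup E] [NormedSpace ℝ E] [FiniteDimensional ℝ E]
  [MeasurableSpace E] [BorelSpace E] [Nontrivial E] (μ : Measure E) [μ.IsAddHaarMeasure]

theorem lintegral_comp_norm {f : ℝ → ℝ≥0∞} (hf : Measurable f) :
    ∫⁻ x, f ‖x‖ ∂μ = μ.toSphere univ * ∫⁻ r in Ioi 0, ENNReal.ofReal (r ^ (dim E - 1)) * f r := by
  have hf' : Measurable fun p : sphere (0 : E) 1 × Ioi (0 : ℝ) => f p.2 :=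
    (hf.comp measurable_subtype_coe).comp measurable_snd
  calc ∫⁻ x, f ‖x‖ ∂μ
      = ∫⁻ x : ({(0 : E)}ᶜ : Set E), f ‖(x : E)‖ ∂(μ.comap (↑)) := by
        rw [lintegral_subtype_comap (measurableSet_singleton _).compl (fun x => f ‖x‖),
          restrict_compl_singleton]
    _ = ∫⁻ p, f p.2 ∂(μ.toSphere.prod (.volumeIoiPow (dim E - 1))) := by
        rw [← μ.measurePreserving_homeomorphUnitSphereProd.lintegral_comp hf']
        simp
    _ = μ.toSphere univ * ∫⁻ r, f r ∂(Measure.volumeIoiPow (dim E - 1)) := by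
        rw [lintegral_prod _ hf'.aemeasurable]
        simp [lintegral_const, mul_comm]
    _ = _ := by
        rw [Measure.volumeIoiPow, lintegral_withDensity_eq_lintegral_mul _ (by fun_prop)
          (g := fun r : Ioi (0 : ℝ) => f r) (hf.comp measurable_subtype_coe)]
        exact congrArg _ (lintegral_subtype_comap measurableSet_Ioi
          fun r : ℝ => ENNReal.ofReal (r ^ (dim E - 1)) * f r)

theorem setLIntegral_preimage_norm_rpow {T : Set ℝ} (hT : MeasurableSet T) (b : ℝ) :
    ∫⁻ x in (‖·‖) ⁻¹' T, ENNReal.ofReal (‖x‖ ^ b) ∂μ =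
      μ.toSphere univ * ∫⁻ r in T ∩ Ioi 0, ENNReal.ofReal (r ^ (b + dim E - 1)) := by
  have hpow : ∀ r ∈ T ∩ Ioi 0, ENNReal.ofReal (r ^ (dim E - 1)) * ENNReal.ofReal (r ^ b) =
      ENNReal.ofReal (r ^ (b + dim E - 1)) := fun r hr => by
    rw [← ENNReal.ofReal_mul (pow_nonneg (le_of_lt hr.2) _), ← Real.rpow_natCast,
      Nat.cast_sub Module.finrank_pos, ← Real.rpow_add hr.2]
    congr 2
    push_cast
    ring
  rw [← lintegral_indicator (measurable_norm hT),
    ← setLIntegral_congr_fun (hT.inter measurableSet_Ioi) hpow,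
    ← Measure.restrict_restrict hT, ← lintegral_indicator hT]
  simp_rw [indicator_mul_right]
  rw [← lintegral_comp_norm μ ((by fun_prop : Measurable _).indicator hT)]
  rfl

theorem setLIntegral_closedBall_norm_rpow {b s : ℝ} (hb : -(dim E : ℝ) < b) (hs : 0 ≤ s) :
    ∫⁻ x in closedBall 0 s, ENNReal.ofReal (‖x‖ ^ b) ∂μ =
      ENNReal.ofReal (μ.toSphere.real univ * (s ^ (b + dim E) / (b + dim E))) := by
  have hT : (‖·‖) ⁻¹' Iic s = closedBall (0 : E) s := by ext; simp
  rw [← hT, setLIntegral_preimage_norm_rpow μ measurableSet_Iic, Iic_inter_Ioi,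
    lintegral_Ioc_rpow (by linarith) hs, sub_add_cancel, ENNReal.ofReal_mul measureReal_nonneg,
    ofReal_measureReal]

theorem setLIntegral_compl_closedBall_norm_rpow {b s : ℝ} (hb : b < -(dim E : ℝ)) (hs : 0 < s) :
    ∫⁻ x in (closedBall 0 s)ᶜ, ENNReal.ofReal (‖x‖ ^ b) ∂μ =
      ENNReal.ofReal (μ.toSphere.real univ * (-s ^ (b + dim E) / (b + dim E))) := by
  have hT : (‖·‖) ⁻¹' Ioi s = (closedBall (0 : E) s)ᶜ := by ext; simp
  rw [← hT, setLIntegral_preimage_norm_rpow μ measurableSet_Ioi,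
    inter_eq_left.2 (Ioi_subset_Ioi hs.le), lintegral_Ioi_rpow (by linarith) hs, sub_add_cancel,
    ENNReal.ofReal_mul measureReal_nonneg, ofReal_measureReal]

theorem setLIntegral_closedBall_norm_sub_rpow {b s : ℝ} (hb : -(dim E : ℝ) < b) (hs : 0 ≤ s)
    (x : E) : ∫⁻ y in closedBall x s, ENNReal.ofReal (‖x - y‖ ^ b) ∂μ =
      ENNReal.ofReal (μ.toSphere.real univ * (s ^ (b + dim E) / (b + dim E))) := by
  have hpre : (· - x) ⁻¹' closedBall 0 s = closedBall x s := by
    ext y; simp [dist_eq_norm]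
  simp_rw [norm_sub_rev x]
  rw [← hpre, (measurePreserving_sub_right μ x).setLIntegral_comp_preimage_emb
    (Homeomorph.subRight x).measurableEmbedding (fun z => ENNReal.ofReal (‖z‖ ^ b)),
    setLIntegral_closedBall_norm_rpow μ hb hs]

theorem lintegral_norm_rpow_mul_norm_sub_rpow_le {α θ : ℝ} (hα : 0 < α) (hαθ : α < θ)
    (hθ : θ < dim E) : ∃ C > 0, ∀ x : E, x ≠ 0 →
      ∫⁻ y, ENNReal.ofReal (‖y‖ ^ (-θ) * ‖x - y‖ ^ (α - dim E)) ∂μ ≤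
        ENNReal.ofReal (C * ‖x‖ ^ (α - θ)) := by
  set d : ℝ := (dim E : ℝ)
  set κ := μ.toSphere.real univ
  have : NeZero μ.toSphere := ⟨μ.toSphere_ne_zero⟩
  have hκ : 0 < κ := measureReal_univ_pos
  have hdθ : 0 < d - θ := by linarith
  have hθα : 0 < θ - α := by linarith
  set K := 1 / (d - θ) + 1 / α + 3 ^ (d - α) / (θ - α)
  refine ⟨κ * K * 2 ^ (θ - α), by positivity, fun x hx => ?_⟩
  set ρ := ‖x‖ / 2
  have hρ : 0 < ρ := by positivity
  calc ∫⁻ y, ENNReal.ofReal (‖y‖ ^ (-θ) * ‖x - y‖ ^ (α - d)) ∂μ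
      ≤ ∫⁻ y, ENNReal.ofReal (ρ ^ (α - d)) *
            (closedBall 0 ρ).indicator (fun y => ENNReal.ofReal (‖y‖ ^ (-θ))) y +
          ENNReal.ofReal (ρ ^ (-θ)) *
            (closedBall x ρ).indicator (fun y => ENNReal.ofReal (‖x - y‖ ^ (α - d))) y +
          ENNReal.ofReal (3 ^ (-(α - d))) *
            (closedBall 0 ρ)ᶜ.indicator (fun y => ENNReal.ofReal (‖y‖ ^ (-θ + (α - d)))) y ∂μ :=
        lintegral_mono fun y =>
          ofReal_norm_rpow_mul_norm_sub_rpow_le (by linarith) (by linarith) hx y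
    _ = ENNReal.ofReal (ρ ^ (α - d)) * ENNReal.ofReal (κ * (ρ ^ (-θ + d) / (-θ + d))) +
          ENNReal.ofReal (ρ ^ (-θ)) * ENNReal.ofReal (κ * (ρ ^ (α - d + d) / (α - d + d))) +
          ENNReal.ofReal (3 ^ (-(α - d))) *
            ENNReal.ofReal (κ * (-ρ ^ (-θ + (α - d) + d) / (-θ + (α - d) + d))) := by
      rw [lintegral_add_left, lintegral_add_left, lintegral_const_mul, lintegral_const_mul,
        lintegral_const_mul, lintegral_indicator measurableSet_closedBall,
        lintegral_indicator measurableSet_closedBall,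
        lintegral_indicator measurableSet_closedBall.compl,
        setLIntegral_closedBall_norm_rpow μ (by linarith) hρ.le,
        setLIntegral_closedBall_norm_sub_rpow μ (by linarith) hρ.le,
        setLIntegral_compl_closedBall_norm_rpow μ (by linarith) hρ]
      all_goals fun_prop (disch := measurability)
    _ = ENNReal.ofReal (κ * K * 2 ^ (θ - α) * ‖x‖ ^ (α - θ)) := by
      have h₁ : ρ ^ (α - d) * ρ ^ (d - θ) = ρ ^ (α - θ) := by rw [← rpow_add hρ]; ring_nf
      have h₂ : ρ ^ (-θ) * ρ ^ α = ρ ^ (α - θ) := by rw [← rpow_add hρ]; ring_nf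
      have h₃ : ρ ^ (α - θ) = 2 ^ (θ - α) * ‖x‖ ^ (α - θ) := by
        rw [div_two_rpow (norm_nonneg x), neg_sub]
      rw [show -θ + d = d - θ by ring, show α - d + d = α by ring,
        show -θ + (α - d) + d = α - θ by ring, show -(α - d) = d - α by ring, neg_div,
        ← div_neg, neg_sub, ← ENNReal.ofReal_mul (by positivity),
        ← ENNReal.ofReal_mul (by positivity), ← ENNReal.ofReal_mul (by positivity),
        ← ENNReal.ofReal_add (by positivity) (by positivity),
        ← ENNReal.ofReal_add (by positivity) (by positivity)]
      congr 1
      linear_combination (κ / (d - θ)) * h₁ + (κ / α) * h₂ + κ * K * h₃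

theorem lintegral_min_norm_rpow_lt_top {θ τ : ℝ} (hθ : θ < dim E) (hτ : dim E < τ) :
    ∫⁻ y, ENNReal.ofReal (min (‖y‖ ^ (-θ)) (‖y‖ ^ (-τ))) ∂μ < ∞ := by
  rw [← lintegral_add_compl _ (measurableSet_closedBall (x := 0) (ε := 1))]
  refine ENNReal.add_lt_top.2 ⟨?_, ?_⟩
  · calc _ ≤ ∫⁻ y in closedBall 0 1, ENNReal.ofReal (‖y‖ ^ (-θ)) ∂μ :=
          lintegral_mono fun y => ENNReal.ofReal_le_ofReal (min_le_left _ _)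
      _ < ∞ := by
          rw [setLIntegral_closedBall_norm_rpow μ (by linarith) zero_le_one]
          exact ENNReal.ofReal_lt_top
  · calc _ ≤ ∫⁻ y in (closedBall 0 1)ᶜ, ENNReal.ofReal (‖y‖ ^ (-τ)) ∂μ :=
          lintegral_mono fun y => ENNReal.ofReal_le_ofReal (min_le_right _ _)
      _ < ∞ := by
          rw [setLIntegral_compl_closedBall_norm_rpow μ (by linarith) zero_lt_one]
          exact ENNReal.ofReal_lt_top

theorem lintegral_min_norm_rpow_mul_norm_sub_rpow_le_of_one_le {α θ τ C : ℝ} (hαθ : α < θ)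
    (hθ : θ < dim E) (hτ : dim E < τ) (hC : 0 ≤ C) {x : E} (hx : 1 ≤ ‖x‖)
    (hRiesz : ∫⁻ y, ENNReal.ofReal (‖y‖ ^ (-θ) * ‖x - y‖ ^ (α - dim E)) ∂μ ≤
      ENNReal.ofReal (C * ‖x‖ ^ (α - θ))) :
    ∫⁻ y, ENNReal.ofReal (min (‖y‖ ^ (-θ)) (‖y‖ ^ (-τ)) * ‖x - y‖ ^ (α - dim E)) ∂μ ≤
      ENNReal.ofReal ((2 ^ (dim E - α) *
          (∫⁻ y, ENNReal.ofReal (min (‖y‖ ^ (-θ)) (‖y‖ ^ (-τ))) ∂μ).toReal +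
        2 ^ (τ - θ) * C) * ‖x‖ ^ (α - dim E)) := by
  set d : ℝ := (dim E : ℝ)
  set M := (∫⁻ y, ENNReal.ofReal (min (‖y‖ ^ (-θ)) (‖y‖ ^ (-τ))) ∂μ).toReal
  have hM : ∫⁻ y, ENNReal.ofReal (min (‖y‖ ^ (-θ)) (‖y‖ ^ (-τ))) ∂μ = ENNReal.ofReal M :=
    (ENNReal.ofReal_toReal (lintegral_min_norm_rpow_lt_top μ hθ hτ).ne).symm
  set R := ‖x‖
  have hR : 0 < R := by linarith
  have hfar : (R / 2) ^ (θ - τ) * R ^ (α - θ) ≤ 2 ^ (τ - θ) * R ^ (α - d) := by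
    rw [div_two_rpow hR.le, neg_sub, mul_assoc, ← rpow_add hR]
    exact mul_le_mul_of_nonneg_left
      (rpow_le_rpow_of_exponent_le hx (by linarith)) (by positivity)
  calc _ ≤ ∫⁻ y, ENNReal.ofReal ((R / 2) ^ (α - d)) *
            ENNReal.ofReal (min (‖y‖ ^ (-θ)) (‖y‖ ^ (-τ))) +
          ENNReal.ofReal ((R / 2) ^ (θ - τ)) *
            ENNReal.ofReal (‖y‖ ^ (-θ) * ‖x - y‖ ^ (α - d)) ∂μ :=
        lintegral_mono fun y =>
          ofReal_min_rpow_mul_norm_sub_rpow_le (by linarith) (by linarith) (norm_pos_iff.1 hR) y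
    _ = ENNReal.ofReal ((R / 2) ^ (α - d)) *
            ∫⁻ y, ENNReal.ofReal (min (‖y‖ ^ (-θ)) (‖y‖ ^ (-τ))) ∂μ +
          ENNReal.ofReal ((R / 2) ^ (θ - τ)) *
            ∫⁻ y, ENNReal.ofReal (‖y‖ ^ (-θ) * ‖x - y‖ ^ (α - d)) ∂μ := by
        rw [lintegral_add_left (by fun_prop), lintegral_const_mul _ (by fun_prop),
          lintegral_const_mul _ (by fun_prop)]
    _ ≤ ENNReal.ofReal ((R / 2) ^ (α - d)) * ENNReal.ofReal M +
          ENNReal.ofReal ((R / 2) ^ (θ - τ)) * ENNReal.ofReal (C * R ^ (α - θ)) := by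
        rw [hM]
        gcongr
    _ = ENNReal.ofReal ((R / 2) ^ (α - d) * M + (R / 2) ^ (θ - τ) * (C * R ^ (α - θ))) := by
        rw [ENNReal.ofReal_add (by positivity) (by positivity),
          ENNReal.ofReal_mul (p := (R / 2) ^ (α - d)) (by positivity),
          ENNReal.ofReal_mul (p := (R / 2) ^ (θ - τ)) (by positivity)]
    _ ≤ _ := by
        refine ENNReal.ofReal_le_ofReal ?_
        rw [div_two_rpow hR.le, neg_sub]
        nlinarith [mul_le_mul_of_nonneg_left hfar hC]

theorem lintegral_min_norm_rpow_mul_norm_sub_rpow_le {α θ τ : ℝ} (hα : 0 < α) (hαθ : α < θ)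
    (hθ : θ < dim E) (hτ : dim E < τ) : ∃ c > 0, ∀ x : E, x ≠ 0 →
      ∫⁻ y, ENNReal.ofReal (min (‖y‖ ^ (-θ)) (‖y‖ ^ (-τ)) * ‖x - y‖ ^ (α - dim E)) ∂μ ≤
        ENNReal.ofReal (c * (‖x‖ ^ (α - θ) * (1 + ‖x‖) ^ (θ - dim E))) := by
  set d : ℝ := (dim E : ℝ)
  obtain ⟨C, hC, hRiesz⟩ := lintegral_norm_rpow_mul_norm_sub_rpow_le μ hα hαθ hθ
  set M := (∫⁻ y, ENNReal.ofReal (min (‖y‖ ^ (-θ)) (‖y‖ ^ (-τ))) ∂μ).toReal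
  set K := C + (2 ^ (d - α) * M + 2 ^ (τ - θ) * C)
  have hK : 0 < K := by positivity
  refine ⟨K / 2 ^ (θ - d), by positivity, fun x hx => ?_⟩
  set R := ‖x‖
  have hR : 0 < R := norm_pos_iff.2 hx
  have hweight : ∀ {a : ℝ}, 2 ^ (θ - d) * R ^ a ≤ R ^ (α - θ) * (1 + R) ^ (θ - d) →
      K * R ^ a ≤ K / 2 ^ (θ - d) * (R ^ (α - θ) * (1 + R) ^ (θ - d)) := fun h => by
    rw [div_mul_eq_mul_div, le_div_iff₀ (by positivity)]
    nlinarith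
  rcases le_total R 1 with hR1 | hR1
  · calc _ ≤ ∫⁻ y, ENNReal.ofReal (‖y‖ ^ (-θ) * ‖x - y‖ ^ (α - d)) ∂μ :=
          lintegral_mono fun y => ENNReal.ofReal_le_ofReal
            (mul_le_mul_of_nonneg_right (min_le_left _ _) (by positivity))
      _ ≤ ENNReal.ofReal (C * R ^ (α - θ)) := hRiesz x hx
      _ ≤ _ := ENNReal.ofReal_le_ofReal <|
          (mul_le_mul_of_nonneg_right (le_add_of_nonneg_right (by positivity)) (by positivity)).trans
            (hweight (two_rpow_mul_rpow_le_of_le_one hR hR1 hθ.le))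
  · calc _ ≤ _ := lintegral_min_norm_rpow_mul_norm_sub_rpow_le_of_one_le μ hαθ hθ hτ hC.le hR1
          (hRiesz x hx)
      _ ≤ _ := ENNReal.ofReal_le_ofReal <|
          (mul_le_mul_of_nonneg_right (le_add_of_nonneg_left hC.le) (by positivity)).trans
            (hweight (two_rpow_mul_rpow_le_of_one_le hR1 hθ.le))

end Radial

theorem statement_7_general (N : ℕ) (α θ τ : ℝ)
    (hα : α ∈ Set.Ioo (0:ℝ) (N:ℝ)) (hθ : α < θ) (hθ' : θ < (N:ℝ)) (hτ : (N:ℝ) < τ)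
    (f : EuclideanSpace ℝ (Fin N) → ℝ)
    (hf_bound : ∀ x : EuclideanSpace ℝ (Fin N), x ≠ 0 → f x ≤ ‖x‖ ^ (-θ) * (1 + ‖x‖) ^ (θ - τ)) :
    ∃ c : ℝ, 0 < c ∧ ∀ x : EuclideanSpace ℝ (Fin N), x ≠ 0 →
      ∫ y : EuclideanSpace ℝ (Fin N), f y * ‖x - y‖ ^ (α - (N:ℝ)) ≤
        c * (‖x‖ ^ (α - θ) * (1 + ‖x‖) ^ (θ - (N:ℝ))) := by
  have : Nontrivial (EuclideanSpace ℝ (Fin N)) := Module.nontrivial_of_finrank_pos (R := ℝ)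
    (by rw [finrank_euclideanSpace_fin]; exact_mod_cast hα.1.trans hα.2)
  obtain ⟨c, hc, hpot⟩ := lintegral_min_norm_rpow_mul_norm_sub_rpow_le
    (volume : Measure (EuclideanSpace ℝ (Fin N))) hα.1 hθ
    (by rwa [finrank_euclideanSpace_fin]) (by rwa [finrank_euclideanSpace_fin])
  simp only [finrank_euclideanSpace_fin] at hpot
  refine ⟨c, hc, fun x hx => integral_le_of_ae_le_of_lintegral_le (by fun_prop)
    (ae_of_all _ fun y => by positivity) ?_ (by positivity) (hpot x hx)⟩
  filter_upwards [Measure.ae_ne volume 0] with y hy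
  exact mul_le_mul_of_nonneg_right ((hf_bound y hy).trans
    (rpow_neg_mul_one_add_rpow_le_min (norm_pos_iff.2 hy) (by linarith))) (by positivity)

/-- Corollary 2.2, Riesz potential estimate. -/
theorem statement_7 (N : ℕ) (hN : 3 ≤ N) (α θ τ : ℝ)
    (hα : α ∈ Set.Ioo (0:ℝ) (N:ℝ)) (hθ : α < θ) (hθ' : θ < (N:ℝ)) (hτ : (N:ℝ) < τ)
    (f : EuclideanSpace ℝ (Fin N) → ℝ) (hf_meas : Measurable f)
    (hf_nonneg : ∀ x : EuclideanSpace ℝ (Fin N), x ≠ 0 → 0 ≤ f x)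
    (hf_bound : ∀ x : EuclideanSpace ℝ (Fin N), x ≠ 0 → f x ≤ ‖x‖ ^ (-θ) * (1 + ‖x‖) ^ (θ - τ)) :
    ∃ c : ℝ, 0 < c ∧ ∀ x : EuclideanSpace ℝ (Fin N), x ≠ 0 →
      ∫ y : EuclideanSpace ℝ (Fin N), f y * ‖x - y‖ ^ (α - (N:ℝ)) ≤
        c * (‖x‖ ^ (α - θ) * (1 + ‖x‖) ^ (θ - (N:ℝ))) :=
  statement_7_general N α θ τ hα hθ hθ' hτ f hf_bound
end
end

section
/- Let a > 0, b ∈ ℝ and p ∈ (1,2]. Then (max(a+b,0))^p ≤ a^p + p·a^{p-1}|b| + |b|^p. -/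
open Real MeasureTheory Filter Metric Set

noncomputable section

/- Both sides agree at `c = 0`, and the derivative in `c` of their difference is
`p * (a ^ (p - 1) + c ^ (p - 1) - (a + c) ^ (p - 1)) ≥ 0` by subadditivity of `t ↦ t ^ (p - 1)`,
since `0 ≤ p - 1 ≤ 1`. -/
lemma rpow_add_le_rpow_add_mul_add_rpow {a c p : ℝ} (ha : 0 ≤ a) (hc : 0 ≤ c)
    (hp1 : 1 ≤ p) (hp2 : p ≤ 2) :
    (a + c) ^ p ≤ a ^ p + p * a ^ (p - 1) * c + c ^ p := by
  set g : ℝ → ℝ := fun t => a ^ p + p * a ^ (p - 1) * t + t ^ p - (a + t) ^ p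
  have hg (t : ℝ) :
      HasDerivAt g (p * a ^ (p - 1) + p * t ^ (p - 1) - p * (a + t) ^ (p - 1)) t := by
    have hshift : HasDerivAt (fun t => (a + t) ^ p) (1 * p * (a + t) ^ (p - 1)) t :=
      ((hasDerivAt_id t).const_add a).rpow_const (Or.inr hp1)
    exact ((((hasDerivAt_id t).const_mul (p * a ^ (p - 1))).const_add (a ^ p)).add
      (hasDerivAt_rpow_const (Or.inr hp1))).sub hshift |>.congr_deriv (by ring)
  have hmono : MonotoneOn g (Ici 0) := by
    refine monotoneOn_of_hasDerivWithinAt_nonneg (convex_Ici 0)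
      (fun t _ => (hg t).continuousAt.continuousWithinAt) (fun t _ => (hg t).hasDerivWithinAt)
      fun t ht => ?_
    rw [interior_Ici] at ht
    have hsub := rpow_add_le_add_rpow ha ht.le (by linarith) (by linarith : p - 1 ≤ 1)
    rw [← mul_add, ← mul_sub]
    exact mul_nonneg (by linarith) (sub_nonneg.2 hsub)
  have hg0c := hmono self_mem_Ici (mem_Ici.2 hc) hc
  simp only [g, mul_zero, add_zero, zero_rpow (by linarith : p ≠ 0)] at hg0c
  linarith

/-- elementary inequality for `1 < p ≤ 2`. -/
theorem statement_10 (a b p : ℝ) (ha : 0 < a) (hp : p ∈ Set.Ioc (1:ℝ) 2) :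
    max (a + b) 0 ^ p ≤ a ^ p + p * a ^ (p - 1) * |b| + |b| ^ p := by
  obtain ⟨hp1, hp2⟩ := hp
  have hmax : max (a + b) 0 ≤ a + |b| :=
    max_le (by linarith [le_abs_self b]) (by positivity)
  calc max (a + b) 0 ^ p ≤ (a + |b|) ^ p := rpow_le_rpow (le_max_right _ _) hmax (by linarith)
    _ ≤ _ := rpow_add_le_rpow_add_mul_add_rpow ha.le (abs_nonneg b) hp1.le hp2
end
end

section
/- Let a > 0, b ∈ ℝ and p > 2. Then (max(a+b,0))^p ≤ a^p + p·a^{p-1}|b| + 2^p·p(p-1)·a^{p-2}b² + 2^p|b|^p. -/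
open Real MeasureTheory Filter Metric Set

noncomputable section

lemma tangent_aux (x y q : ℝ) (hx : 0 ≤ x) (hy : 0 < y) (hq : 1 ≤ q) :
    y ^ q ≤ x ^ q + q * y ^ (q - 1) * (y - x) := by
  have hs : (-1 : ℝ) ≤ x / y - 1 := by
    have : 0 ≤ x / y := div_nonneg hx hy.le
    linarith
  have h := one_add_mul_self_le_rpow_one_add hs hq
  rw [show (1 + (x / y - 1)) = x / y by ring, Real.div_rpow hx hy.le] at h
  have hyq : 0 < y ^ q := Real.rpow_pos_of_pos hy q
  have h3 : (1 + q * (x / y - 1)) * y ^ q ≤ x ^ q := by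
    have := mul_le_mul_of_nonneg_right h hyq.le
    rwa [div_mul_cancel₀ _ hyq.ne'] at this
  have hA : y ^ q = y ^ (q - 1) * y := by
    rw [← Real.rpow_add_one hy.ne' (q - 1)]; ring_nf
  rw [hA] at h3 ⊢
  have hy' : y ≠ 0 := hy.ne'
  have key : (1 + q * (x / y - 1)) * (y ^ (q - 1) * y) = y ^ (q - 1) * y + q * y ^ (q - 1) * (x - y) := by field_simp
  rw [key] at h3
  linarith


/-- elementary inequality for `p > 2`. -/
theorem statement_11 (a b p : ℝ) (ha : 0 < a) (hp : 2 < p) :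
    max (a + b) 0 ^ p ≤
      a ^ p + p * a ^ (p - 1) * |b| + 2 ^ p * (p * (p - 1)) * a ^ (p - 2) * b ^ 2
        + 2 ^ p * |b| ^ p := by
  have hp1 : (1:ℝ) ≤ p := by linarith
  rcases le_or_gt |b| a with h | h
  · have hba : -|b| ≤ b := neg_abs_le b
    have hb : 0 ≤ a + b := by linarith
    have hmax : max (a + b) 0 = a + b := max_eq_left hb
    set s := |b| with hs
    have hs0 : 0 ≤ s := abs_nonneg b
    have hy : 0 < a + s := by positivity
    have step1 := tangent_aux a (a + s) p ha.le hy hp1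
    have step2 := tangent_aux a (a + s) (p - 1) ha.le hy (by linarith)
    rw [show a + s - a = s by ring] at step1 step2
    rw [show p - 1 - 1 = p - 2 by ring] at step2
    have step3 : (a + s) ^ (p - 2) ≤ 2 ^ p * a ^ (p - 2) := by
      calc (a + s) ^ (p - 2) ≤ (2 * a) ^ (p - 2) :=
            Real.rpow_le_rpow hy.le (by linarith) (by linarith)
        _ = 2 ^ (p - 2) * a ^ (p - 2) := Real.mul_rpow (by norm_num) ha.le
        _ ≤ 2 ^ p * a ^ (p - 2) := by
            apply mul_le_mul_of_nonneg_right
              (Real.rpow_le_rpow_of_exponent_le one_le_two (by linarith))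
              (Real.rpow_pos_of_pos ha _).le
    have hL : max (a + b) 0 ^ p ≤ (a + s) ^ p := by
      rw [hmax]
      exact Real.rpow_le_rpow hb (by have := le_abs_self b; linarith) (by linarith)
    have hsb : s * s = b ^ 2 := by rw [hs, ← abs_mul, abs_mul_self, sq]
    have c2 : p * (a + s) ^ (p - 1) * s ≤ p * (a ^ (p - 1) + (p - 1) * (a + s) ^ (p - 2) * s) * s := by
      apply mul_le_mul_of_nonneg_right _ hs0
      exact mul_le_mul_of_nonneg_left step2 (by linarith)
    have hpp : (0:ℝ) ≤ p * (p - 1) := by nlinarith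
    have c4 : p * (p - 1) * ((a + s) ^ (p - 2) * b ^ 2) ≤ p * (p - 1) * (2 ^ p * a ^ (p - 2) * b ^ 2) := by
      apply mul_le_mul_of_nonneg_left _ hpp
      exact mul_le_mul_of_nonneg_right step3 (sq_nonneg b)
    have h2bp : (0:ℝ) ≤ 2 ^ p * s ^ p := by positivity
    have cexp : p * (a ^ (p - 1) + (p - 1) * (a + s) ^ (p - 2) * s) * s
        = p * a ^ (p - 1) * s + p * (p - 1) * ((a + s) ^ (p - 2) * b ^ 2) := by
      rw [← hsb]; ring
    have cassoc : p * (p - 1) * (2 ^ p * a ^ (p - 2) * b ^ 2)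
        = 2 ^ p * (p * (p - 1)) * a ^ (p - 2) * b ^ 2 := by ring
    linarith [hL, step1, c2, c4, h2bp]
  · have h2b : max (a + b) 0 ≤ 2 * |b| := by
      have := le_abs_self b
      apply max_le (by linarith) (by positivity)
    have hL : max (a + b) 0 ^ p ≤ (2 * |b|) ^ p :=
      Real.rpow_le_rpow (le_max_right _ 0) h2b (by linarith)
    rw [Real.mul_rpow (by norm_num) (abs_nonneg b)] at hL
    have h1 : 0 < a ^ p := Real.rpow_pos_of_pos ha _
    have h2 : 0 ≤ p * a ^ (p - 1) * |b| := by positivity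
    have h3 : 0 ≤ 2 ^ p * (p * (p - 1)) * a ^ (p - 2) * b ^ 2 := by
      have : (0:ℝ) < p * (p - 1) := by nlinarith
      positivity
    linarith
end
end
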